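/- arXiv:1711.03695 — 3 statements merged into one kernel-verified Lean document; each statement's English description precedes it below -/
import Mathlib

section
/- Let V be a connected groupoid whose objects are a set S, and let C denote the groupoid with one object whose morphism monoid is the additive group of complex numbers. Then the group of groupoid homomorphisms from V to C (under pointwise addition) is isomorphic to the group of group homomorphisms from Γ ⊕ W to C, where Γ is the automorphism group of any fixed object of V and W = { (a_j) ∈ ℤ^S : Σ a_j = 0 }. -/
open CategoryTheory

/-- The additive group of groupoid homomorphisms `Z : V → ℂ` (assignments of complex
numbers to morphisms, additive under composition), realized as an additive subgroup of
the group of all assignments under pointwise addition. -/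
noncomputable def grpdHomGroup (V : Type) [Groupoid V] :
    AddSubgroup (∀ i j : V, (i ⟶ j) → ℂ) where
  carrier := {Z | ∀ (i j k : V) (f : i ⟶ j) (g : j ⟶ k),
    Z i k (f ≫ g) = Z i j f + Z j k g}
  add_mem' := by
    intro a b ha hb i j k f g
    simp only [Pi.add_apply]
    rw [ha i j k f g, hb i j k f g]; ring
  zero_mem' := by intro i j k f g; simp
  neg_mem' := by
    intro a ha i j k f g
    simp only [Pi.neg_apply]
    rw [ha i j k f g]; ring

/-- The sum-zero sublattice `W = {a ∈ ℤ^{Ob V} : Σ a_j = 0}` of the free abelian group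
on the objects of `V`. -/
noncomputable def sumZeroW (V : Type) [Groupoid V] : AddSubgroup (V →₀ ℤ) :=
  (Finsupp.liftAddHom (M := ℤ) (N := ℤ) fun _ : V => AddMonoidHom.id ℤ).ker

/-!
Choose isomorphisms `φ j : i ≅ j`. A morphism `h : j ⟶ k` determines the automorphism
`φ j ≫ h ≫ (φ k)⁻¹` of `i` and the element `e_k - e_j` of `W`, additively under composition, so
every `F : Γ × W →+ ℂ` pulls back to the groupoid homomorphism
`h ↦ F (φ j ≫ h ≫ (φ k)⁻¹, e_k - e_j)`. This pullback is injective because the pairs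
`(γ, e_k - e_j)` generate `Γ × W`, and surjective because a groupoid homomorphism `Z` is the pullback
of `(γ, w) ↦ Z γ + ∑ w_j Z (φ j)`.
-/

namespace sumZeroW

variable {V : Type} [Groupoid V]

lemma mem_iff (w : V →₀ ℤ) : w ∈ sumZeroW V ↔ (w.sum fun _ n => n) = 0 := by
  simp only [sumZeroW, AddMonoidHom.mem_ker, Finsupp.liftAddHom_apply]
  rfl

noncomputable def diff (j k : V) : sumZeroW V :=
  ⟨Finsupp.single k 1 - Finsupp.single j 1, by simp [mem_iff, Finsupp.sum_sub_index]⟩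

@[simp]
lemma coe_diff (j k : V) :
    (diff j k : V →₀ ℤ) = Finsupp.single k 1 - Finsupp.single j 1 := rfl

@[simp]
lemma diff_self (j : V) : diff j j = 0 := by
  ext1; simp

lemma diff_add_diff (j k l : V) : diff j k + diff k l = diff j l := by
  ext1; simp only [AddSubgroup.coe_add, coe_diff]; abel

lemma eq_sum_smul_diff (i : V) (w : sumZeroW V) :
    w = (w : V →₀ ℤ).sum fun j n => n • diff i j := by
  have hw : ∑ j ∈ w.1.support, w.1 j = 0 := (mem_iff _).1 w.2
  ext1
  change _ = (sumZeroW V).subtype _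
  simp only [map_finsuppSum, map_zsmul, AddSubgroup.subtype_apply, coe_diff, smul_sub,
    Finsupp.smul_single_one, Finsupp.sum_sub, Finsupp.sum_single]
  rw [Finsupp.sum, ← Finsupp.single_finsetSum]
  rw [hw, Finsupp.single_zero, sub_zero]

lemma addMonoidHom_ext {A : Type*} [AddCommGroup A] (i : V) {f g : sumZeroW V →+ A}
    (h : ∀ j, f (diff i j) = g (diff i j)) : f = g := by
  ext w
  rw [eq_sum_smul_diff i w, map_finsuppSum, map_finsuppSum]
  simp only [map_zsmul, h]

end sumZeroW

namespace grpdHomGroup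

variable {V : Type} [Groupoid V]

lemma apply_comp (Z : grpdHomGroup V) {j k l : V} (f : j ⟶ k) (g : k ⟶ l) :
    Z.1 j l (f ≫ g) = Z.1 j k f + Z.1 k l g :=
  Z.2 j k l f g

@[simp]
lemma apply_id (Z : grpdHomGroup V) (j : V) : Z.1 j j (𝟙 j) = 0 := by
  simpa using apply_comp Z (𝟙 j) (𝟙 j)

lemma apply_inv (Z : grpdHomGroup V) {j k : V} (f : j ≅ k) : Z.1 k j f.inv = -Z.1 j k f.hom := by
  have h := apply_comp Z f.hom f.inv
  rw [Iso.hom_inv_id, apply_id] at h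
  exact eq_neg_of_add_eq_zero_right h.symm

def restrictAut (Z : grpdHomGroup V) (i : V) : Additive (Aut i) →+ ℂ :=
  AddMonoidHom.mk' (fun γ => Z.1 i i γ.toMul.hom) fun γ δ => by
    change Z.1 i i (δ.toMul.hom ≫ γ.toMul.hom) = _
    rw [apply_comp, add_comm]

@[simp]
lemma restrictAut_apply (Z : grpdHomGroup V) {i : V} (γ : Aut i) :
    restrictAut Z i (Additive.ofMul γ) = Z.1 i i γ.hom := rfl

variable {i : V} (φ : ∀ j : V, i ≅ j)

noncomputable def toAut {j k : V} (h : j ⟶ k) : Aut i :=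
  φ j ≪≫ asIso h ≪≫ (φ k).symm

@[simp]
lemma toAut_hom {j k : V} (h : j ⟶ k) : (toAut φ h).hom = (φ j).hom ≫ h ≫ (φ k).inv := rfl

lemma toAut_comp {j k l : V} (f : j ⟶ k) (g : k ⟶ l) :
    toAut φ (f ≫ g) = toAut φ g * toAut φ f := by
  rw [Aut.Aut_mul_def]; ext; simp [toAut]

lemma toAut_conj (γ : Aut i) (j k : V) : toAut φ ((φ j).inv ≫ γ.hom ≫ (φ k).hom) = γ := by
  ext; simp

noncomputable def ofProdHom : ((Additive (Aut i) × sumZeroW V) →+ ℂ) →+ grpdHomGroup V where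
  toFun F := ⟨fun j k h => F (Additive.ofMul (toAut φ h), sumZeroW.diff j k),
    fun j k l f g => by
      dsimp only
      rw [toAut_comp, ← sumZeroW.diff_add_diff j k l, ofMul_mul, add_comm (sumZeroW.diff j k),
        ← Prod.mk_add_mk, map_add, add_comm]⟩
  map_zero' := rfl
  map_add' _ _ := rfl

lemma ofProdHom_apply (F : (Additive (Aut i) × sumZeroW V) →+ ℂ) {j k : V} (h : j ⟶ k) :
    (ofProdHom φ F).1 j k h = F (Additive.ofMul (toAut φ h), sumZeroW.diff j k) := rfl

lemma ofProdHom_injective : Function.Injective (ofProdHom φ) := by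
  refine (injective_iff_map_eq_zero _).2 fun F hF => ?_
  have hvanish (γ : Aut i) (j k : V) : F (Additive.ofMul γ, sumZeroW.diff j k) = 0 := by
    simpa [ofProdHom_apply, toAut_conj] using
      congr_fun₃ (congrArg Subtype.val hF) j k ((φ j).inv ≫ γ.hom ≫ (φ k).hom)
  have hW : F.comp (AddMonoidHom.inr _ _) = 0 :=
    sumZeroW.addMonoidHom_ext i fun j => by simpa using hvanish 1 i j
  refine AddMonoidHom.ext fun ⟨γ, w⟩ => ?_
  calc F (γ, w) = F (γ, 0) + F (0, w) := by rw [← map_add, Prod.mk_add_mk, add_zero, zero_add]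
    _ = 0 := by
      rw [show F (γ, 0) = 0 by simpa using hvanish γ.toMul i i]
      simpa using DFunLike.congr_fun hW w

noncomputable def toProdHom (Z : grpdHomGroup V) : (Additive (Aut i) × sumZeroW V) →+ ℂ :=
  (restrictAut Z i).coprod
    ((Finsupp.liftAddHom fun j => zmultiplesHom ℂ (Z.1 i j (φ j).hom)).comp
      (sumZeroW V).subtype)

lemma ofProdHom_toProdHom (Z : grpdHomGroup V) : ofProdHom φ (toProdHom φ Z) = Z := by
  ext j k h
  simp only [ofProdHom_apply, toProdHom, AddMonoidHom.coprod_apply, AddMonoidHom.comp_apply,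
    restrictAut_apply, toAut_hom, AddSubgroup.subtype_apply, sumZeroW.coe_diff, map_sub,
    Finsupp.liftAddHom_apply_single, zmultiplesHom_apply, one_smul]
  rw [apply_comp, apply_comp, apply_inv]
  ring

lemma ofProdHom_surjective : Function.Surjective (ofProdHom φ) :=
  fun Z => ⟨toProdHom φ Z, ofProdHom_toProdHom φ Z⟩

end grpdHomGroup

/-- for a connected groupoid `V`, the group of groupoid homomorphisms
`V → ℂ` (under pointwise addition) is isomorphic to the group of group homomorphisms
`Γ ⊕ W → ℂ`, where `Γ = Aut(i)` is the automorphism group of any fixed object `i` and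
`W = {a ∈ ℤ^{Ob V} : Σ a_j = 0}`. -/
theorem stmt0 (V : Type) [Groupoid V]
    (hconn : ∀ i j : V, Nonempty (i ≅ j)) (i : V) :
    Nonempty ((grpdHomGroup V) ≃+
      ((Additive (Aut i) × (sumZeroW V)) →+ ℂ)) := by
  let φ : ∀ j : V, i ≅ j := fun j => (hconn i j).some
  exact ⟨(AddEquiv.ofBijective (grpdHomGroup.ofProdHom φ)
    ⟨grpdHomGroup.ofProdHom_injective φ, grpdHomGroup.ofProdHom_surjective φ⟩).symm⟩
end

section
/- For the A_n quiver, every indecomposable finite-dimensional representation is isomorphic to an interval module M_{ij} for some 0 ≤ i < j ≤ n; consequently the dimension vectors of indecomposables are exactly the positive roots u_{ij} = e_{i+1} + ⋯ + e_j of the type A_n root system. -/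
/-!
Let `j` be the highest vertex with `V j ≠ 0`, pick `x ≠ 0` in `V j` and push it down along the
arrows: it survives exactly on an interval `(i, j]` and spans a copy of `M_{ij}` in `M`. A
functional `φ` on `V (i + 1)` with `φ x_{i+1} = 1`, pulled back up along the arrows, is a
retraction onto this copy; it commutes with the arrow leaving `j + 1` only because
`V (j + 1) = 0`. Hence `M_{ij}` is a direct summand of `M`, and indecomposability leaves no
complement.
-/

/-- The one-dimensional space `K` if `P` holds, else `0`, as a submodule of `K`. -/
def Vsp (K : Type) [Field K] (P : Prop) : Submodule K K where
  carrier := {x | ¬P → x = 0}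
  add_mem' := fun {a b} ha hb h => by rw [ha h, hb h, add_zero]
  zero_mem' := fun _ => rfl
  smul_mem' := fun c {x} hx h => by rw [hx h, smul_zero]

lemma mem_Vsp (K : Type) [Field K] (P : Prop) (x : K) :
    x ∈ Vsp K P ↔ (¬P → x = 0) := Iff.rfl

/-- The vector space of the interval module `M_{ij}` at vertex `m`. -/
abbrev ispace (K : Type) [Field K] (i j m : ℕ) : Submodule K K :=
  Vsp K (i < m ∧ m ≤ j)

noncomputable section
open scoped Classical

/-- The structure map `(M_{ij})_{m+1} → (M_{ij})_m`. -/
def imap (K : Type) [Field K] (i j m : ℕ) :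
    ispace K i j (m + 1) →ₗ[K] ispace K i j m :=
  if h : (i < m ∧ m ≤ j) ∧ (i < m + 1 ∧ m + 1 ≤ j) then
    LinearMap.codRestrict (ispace K i j m) ((ispace K i j (m + 1)).subtype)
      (fun _ => (mem_Vsp K _ _).mpr (fun hn => absurd h.1 hn))
  else 0

/-- A representation of the `A_n` quiver (vertices `1, …, n`, arrows `m+1 → m`):
vector spaces `V m` (trivial for `m = 0` and `m > n`) and structure maps
`f m : V (m+1) → V m`. -/
structure ARep (K : Type) [Field K] (n : ℕ) where
  V : ℕ → Type
  [acg : ∀ m, AddCommGroup (V m)]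
  [mod : ∀ m, Module K (V m)]
  f : ∀ m, V (m + 1) →ₗ[K] V m
  small : ∀ m, m = 0 ∨ n < m → Subsingleton (V m)

attribute [instance] ARep.acg ARep.mod

/-- Direct sum of two representations. -/
def ARep.dsum {K : Type} [Field K] {n : ℕ} (M N : ARep K n) : ARep K n where
  V := fun m => M.V m × N.V m
  f := fun m => LinearMap.prodMap (M.f m) (N.f m)
  small := fun m hm => by
    have h1 := M.small m hm
    have h2 := N.small m hm
    exact ⟨fun a b => Prod.ext (Subsingleton.elim _ _) (Subsingleton.elim _ _)⟩

/-- The interval module `M_{ij}` as a representation. -/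
def intervalRep (K : Type) [Field K] (n i j : ℕ) (hj : j ≤ n) : ARep K n where
  V := fun m => ispace K i j m
  f := fun m => imap K i j m
  small := fun m hm =>
    ⟨fun a b => Subtype.ext (by
      have hp : ¬(i < m ∧ m ≤ j) := by rcases hm with h | h <;> omega
      rw [(mem_Vsp K _ _).mp a.2 hp, (mem_Vsp K _ _).mp b.2 hp])⟩

/-- Isomorphism of representations. -/
def RepIso {K : Type} [Field K] {n : ℕ} (M N : ARep K n) : Prop :=
  ∃ e : ∀ m, M.V m ≃ₗ[K] N.V m, ∀ m x, e m (M.f m x) = N.f m (e (m + 1) x)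

/-- A representation is indecomposable if it is nonzero and any decomposition as a
direct sum has a trivial summand. -/
def Indec {K : Type} [Field K] {n : ℕ} (M : ARep K n) : Prop :=
  (∃ m, Nontrivial (M.V m)) ∧
    ∀ N P : ARep K n, RepIso M (N.dsum P) →
      (∀ m, Subsingleton (N.V m)) ∨ (∀ m, Subsingleton (P.V m))

open Module

lemma finrank_Vsp (K : Type) [Field K] (P : Prop) [Decidable P] :
    finrank K (Vsp K P) = if P then 1 else 0 := by
  by_cases hP : P
  · have : Vsp K P = ⊤ := eq_top_iff.mpr fun _ _ h => absurd hP h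
    rw [this, finrank_top, finrank_self, if_pos hP]
  · have : Vsp K P = ⊥ := eq_bot_iff.mpr fun _ hx => (Submodule.mem_bot K).mpr (hx hP)
    rw [this, finrank_bot, if_neg hP]

lemma coe_imap (K : Type) [Field K] (i j m : ℕ) (c : ispace K i j (m + 1)) :
    (imap K i j m c : K) = if i < m then (c : K) else 0 := by
  have hc : ¬(i < m + 1 ∧ m + 1 ≤ j) → (c : K) = 0 := c.2
  unfold imap
  by_cases him : i < m
  · rw [if_pos him]
    split_ifs with h
    · rfl
    · exact (hc fun h' => h ⟨⟨him, by omega⟩, h'⟩).symm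
  · rw [if_neg him, dif_neg fun h => him h.1.1]
    rfl

lemma nontrivial_ispace (K : Type) [Field K] {i j m : ℕ} (h : i < m ∧ m ≤ j) :
    Nontrivial (ispace K i j m) :=
  ⟨⟨⟨1, fun h' => absurd h h'⟩, 0, fun h' => one_ne_zero (congrArg Subtype.val h')⟩⟩

namespace ARep

variable {K : Type} [Field K] {n : ℕ}

structure Hom (M N : ARep K n) where
  app : ∀ m, M.V m →ₗ[K] N.V m
  comm : ∀ m x, app m (M.f m x) = N.f m (app (m + 1) x)

namespace Hom

variable {M X : ARep K n}

def ker (r : Hom M X) : ARep K n where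
  V m := LinearMap.ker (r.app m)
  f m := (M.f m).restrict fun x hx => by
    rw [LinearMap.mem_ker] at hx ⊢
    rw [r.comm, hx, map_zero]
  small m hm := by
    have := M.small m hm
    infer_instance

variable (s : Hom X M) (r : Hom M X)

def equivProdKer (hrs : ∀ m x, r.app m (s.app m x) = x) (m : ℕ) :
    M.V m ≃ₗ[K] X.V m × LinearMap.ker (r.app m) :=
  LinearEquiv.ofLinearMap
    ((r.app m).prod (LinearMap.codRestrict _ (LinearMap.id - s.app m ∘ₗ r.app m)
      fun v => by simp [LinearMap.mem_ker, hrs]))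
    ((s.app m).coprod (LinearMap.ker (r.app m)).subtype)
    (by ext <;> simp [hrs])
    (by ext; simp)

theorem repIso_dsum_ker (hrs : ∀ m x, r.app m (s.app m x) = x) :
    RepIso M (X.dsum (ker r)) := by
  refine ⟨equivProdKer s r hrs, fun m v => Prod.ext (r.comm m v) (Subtype.ext ?_)⟩
  change M.f m v - s.app m (r.app m (M.f m v)) = M.f m (v - s.app (m + 1) (r.app (m + 1) v))
  rw [map_sub, r.comm, s.comm]

theorem repIso_of_indec_of_retraction (hrs : ∀ m x, r.app m (s.app m x) = x) (hind : Indec M)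
    (hX : ∃ m, Nontrivial (X.V m)) : RepIso M X := by
  rcases hind.2 X (ker r) (repIso_dsum_ker s r hrs) with hXs | hker
  · obtain ⟨m, hm⟩ := hX
    exact absurd (hXs m) (not_subsingleton_iff_nontrivial.mpr hm)
  · refine ⟨fun m => LinearEquiv.ofBijective (r.app m) ⟨?_, ?_⟩, fun m v => r.comm m v⟩
    · have : Subsingleton (LinearMap.ker (r.app m)) := hker m
      exact LinearMap.ker_eq_bot.mp Submodule.eq_bot_of_subsingleton
    · exact fun x => ⟨s.app m x, hrs m x⟩

end Hom

variable (M : ARep K n)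

theorem exists_top_level (h : ∃ m, Nontrivial (M.V m)) :
    ∃ j ≤ n, Nontrivial (M.V j) ∧ ∀ m, j < m → Subsingleton (M.V m) := by
  obtain ⟨m₀, hm₀⟩ := h
  have hm₀n : m₀ ≤ n := by
    by_contra hlt
    have := M.small m₀ (Or.inr (not_le.mp hlt))
    exact not_nontrivial _ hm₀
  refine ⟨Nat.findGreatest (fun m => Nontrivial (M.V m)) n, Nat.findGreatest_le n,
    Nat.findGreatest_spec (P := fun m => Nontrivial (M.V m)) hm₀n hm₀, fun m hm => ?_⟩
  by_cases hmn : m ≤ n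
  · exact not_nontrivial_iff_subsingleton.mp (Nat.findGreatest_is_greatest hm hmn)
  · exact M.small m (Or.inr (not_le.mp hmn))

def descend {j : ℕ} (x : M.V j) (m : ℕ) : M.V m :=
  if m < j then M.f m (descend x (m + 1))
  else if h : j = m then h ▸ x else 0
termination_by j - m

variable {M}

theorem descend_self {j : ℕ} (x : M.V j) : M.descend x j = x := by
  rw [descend, if_neg (lt_irrefl j), dif_pos rfl]

theorem descend_of_lt {j m : ℕ} (x : M.V j) (h : m < j) :
    M.descend x m = M.f m (M.descend x (m + 1)) := by
  rw [descend, if_pos h]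

theorem exists_descend_eq_zero_and_succ_ne_zero {j : ℕ} {x : M.V j} (hx : x ≠ 0) :
    ∃ i < j, M.descend x i = 0 ∧ M.descend x (i + 1) ≠ 0 := by
  have h0 : M.descend x 0 = 0 := by
    have := M.small 0 (Or.inl rfl)
    exact Subsingleton.elim _ _
  set i := Nat.findGreatest (fun m => M.descend x m = 0) j
  have hi : M.descend x i = 0 :=
    Nat.findGreatest_spec (P := fun m => M.descend x m = 0) (Nat.zero_le j) h0
  have hij : i < j := by
    refine (Nat.findGreatest_le j).lt_of_ne fun he => hx ?_
    have hj : M.descend x j = 0 := Eq.subst (motive := fun k => M.descend x k = 0) he hi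
    rwa [descend_self] at hj
  exact ⟨i, hij, hi, Nat.findGreatest_is_greatest (Nat.lt_succ_self i) hij⟩

def ascend {i : ℕ} (φ : Dual K (M.V (i + 1))) : ∀ m, Dual K (M.V m)
  | 0 => 0
  | m + 1 => if h : m = i then h ▸ φ else if i < m then ascend φ m ∘ₗ M.f m else 0

theorem ascend_succ_self {i : ℕ} (φ : Dual K (M.V (i + 1))) : M.ascend φ (i + 1) = φ := by
  simp [ascend]

theorem ascend_of_le {i m : ℕ} (φ : Dual K (M.V (i + 1))) (h : m ≤ i) : M.ascend φ m = 0 := by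
  cases m with
  | zero => rfl
  | succ m => simp [ascend, show m ≠ i by omega, show ¬i < m by omega]

theorem ascend_succ_of_lt {i m : ℕ} (φ : Dual K (M.V (i + 1))) (h : i < m) :
    M.ascend φ (m + 1) = M.ascend φ m ∘ₗ M.f m := by
  simp [ascend, h.ne', h]

theorem ascend_apply_descend {i j m : ℕ} (φ : Dual K (M.V (i + 1))) (x : M.V j)
    (him : i < m) (hmj : m ≤ j) :
    M.ascend φ m (M.descend x m) = φ (M.descend x (i + 1)) := by
  induction m, him using Nat.le_induction with
  | base => rw [ascend_succ_self]
  | succ m him ih =>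
    rw [ascend_succ_of_lt φ him, LinearMap.comp_apply, ← descend_of_lt x hmj]
    exact ih (by omega)

theorem imap_smul_descend {i j m : ℕ} (x : M.V j) (hi : M.descend x i = 0)
    (c : ispace K i j (m + 1)) :
    (imap K i j m c : K) • M.descend x m = (c : K) • M.f m (M.descend x (m + 1)) := by
  have hc : ¬(i < m + 1 ∧ m + 1 ≤ j) → (c : K) = 0 := c.2
  rw [coe_imap]
  by_cases hmj : m < j
  · rw [← descend_of_lt x hmj]
    split_ifs with him
    · rfl
    · rcases (not_lt.mp him).lt_or_eq with hlt | rfl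
      · rw [hc (by omega), zero_smul]
      · rw [hi, smul_zero, smul_zero]
  · simp [hc (by omega)]

def intervalSection {i j : ℕ} (hj : j ≤ n) (x : M.V j) (hi : M.descend x i = 0) :
    Hom (intervalRep K n i j hj) M where
  app m := LinearMap.toSpanSingleton K (M.V m) (M.descend x m) ∘ₗ (ispace K i j m).subtype
  comm m c := (imap_smul_descend x hi c).trans (map_smul (M.f m) _ _).symm

theorem ascend_apply_f {i m : ℕ} (φ : Dual K (M.V (i + 1))) (v : M.V (m + 1)) :
    M.ascend φ m (M.f m v) = if i < m then M.ascend φ (m + 1) v else 0 := by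
  split_ifs with him
  · rw [ascend_succ_of_lt φ him]
    rfl
  · rw [ascend_of_le φ (not_lt.mp him)]
    rfl

theorem ascend_mem_ispace {i j m : ℕ} (htop : ∀ m, j < m → Subsingleton (M.V m))
    (φ : Dual K (M.V (i + 1))) (v : M.V m) : M.ascend φ m v ∈ ispace K i j m := by
  refine (mem_Vsp K _ _).mpr fun hv => ?_
  rcases not_and_or.mp hv with him | hjm
  · rw [ascend_of_le φ (not_lt.mp him), LinearMap.zero_apply]
  · have := htop m (not_le.mp hjm)
    rw [Subsingleton.elim v 0, map_zero]

def intervalRetraction {i j : ℕ} (hj : j ≤ n) (htop : ∀ m, j < m → Subsingleton (M.V m))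
    (φ : Dual K (M.V (i + 1))) : Hom M (intervalRep K n i j hj) where
  app m := LinearMap.codRestrict (ispace K i j m) (M.ascend φ m) (ascend_mem_ispace htop φ)
  comm m v := Subtype.ext <|
    (ascend_apply_f φ v).trans (coe_imap K i j m ⟨_, ascend_mem_ispace htop φ v⟩).symm

theorem intervalRetraction_intervalSection {i j : ℕ} (hj : j ≤ n)
    (htop : ∀ m, j < m → Subsingleton (M.V m)) (x : M.V j) (hi : M.descend x i = 0)
    {φ : Dual K (M.V (i + 1))} (hφ : φ (M.descend x (i + 1)) = 1) (m : ℕ)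
    (c : ispace K i j m) :
    (intervalRetraction hj htop φ).app m ((intervalSection hj x hi).app m c) = c := by
  have hval : M.ascend φ m ((c : K) • M.descend x m) = c := by
    by_cases h : i < m ∧ m ≤ j
    · rw [map_smul, ascend_apply_descend φ x h.1 h.2, hφ, smul_eq_mul, mul_one]
    · rw [c.2 h, zero_smul, map_zero]
  exact Subtype.ext hval

end ARep

theorem stmt5_general (K : Type) [Field K] (n : ℕ) (M : ARep K n) (hind : Indec M) :
    ∃ (i j : ℕ) (hij : i < j) (hj : j ≤ n),
      RepIso M (intervalRep K n i j hj) ∧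
      (∀ m, Module.finrank K (M.V m) = if i < m ∧ m ≤ j then 1 else 0) := by
  obtain ⟨j, hjn, hj, htop⟩ := M.exists_top_level hind.1
  obtain ⟨x, hx⟩ := exists_ne (0 : M.V j)
  obtain ⟨i, hij, hi, hi1⟩ := ARep.exists_descend_eq_zero_and_succ_ne_zero hx
  obtain ⟨φ, hφ⟩ := Projective.exists_dual_eq_one K hi1
  have hiso : RepIso M (intervalRep K n i j hjn) :=
    ARep.Hom.repIso_of_indec_of_retraction _ _
      (ARep.intervalRetraction_intervalSection hjn htop x hi hφ) hind
      ⟨j, nontrivial_ispace K ⟨hij, le_rfl⟩⟩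
  refine ⟨i, j, hij, hjn, hiso, fun m => ?_⟩
  obtain ⟨e, -⟩ := hiso
  rw [(e m).finrank_eq]
  exact finrank_Vsp K _

/-- Gabriel's theorem in type `A`: every finite-dimensional
indecomposable representation of the `A_n` quiver is isomorphic to an interval module
`M_{ij}` with `0 ≤ i < j ≤ n`; consequently its dimension vector is the positive root
`u_{ij} = e_{i+1} + ⋯ + e_j` of the `A_n` root system. -/
theorem stmt5 (K : Type) [Field K] (n : ℕ) (M : ARep K n)
    (hfd : ∀ m, FiniteDimensional K (M.V m)) (hind : Indec M) :
    ∃ (i j : ℕ) (hij : i < j) (hj : j ≤ n),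
      RepIso M (intervalRep K n i j hj) ∧
      (∀ m, Module.finrank K (M.V m) = if i < m ∧ m ≤ j then 1 else 0) :=
  stmt5_general K n M hind
end
end

section
/- Let Γ be a free abelian group of finite rank with a norm ‖·‖ on Γ ⊗ ℝ, let Z : Γ → ℂ be a group homomorphism, and let a : Γ \ {0} → M be a function to some set with distinguished element 0 with support Supp(a) = {γ : a(γ) ≠ 0}. Then the following are equivalent: (1) there exists C > 0 such that ‖γ‖ ≤ C·|Z(γ)| for all γ ∈ Supp(a); (2) there exists a quadratic form Q on Γ ⊗ ℝ which is negative on ker(Z ⊗ ℝ) \ {0} and nonnegative on Supp(a). -/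
/-!
For (1) ⇒ (2), fix a Euclidean structure on `E` (a continuous injective linear map `T` into an
inner product space); then `Q x = (‖T‖ C)² ‖L x‖² - ‖T x‖²` is negative on `ker L \ {0}` and
nonnegative wherever `‖x‖ ≤ C ‖L x‖`.

For (2) ⇒ (1), the set `K` of unit vectors with `Q ≥ 0` is compact and misses `ker L`, so `‖L‖`
has a positive lower bound `m` on `K`; by homogeneity `‖x‖ ≤ m⁻¹ ‖L x‖` whenever `Q x ≥ 0`.
-/

open Metric

variable {E F G : Type*} [NormedAddCommGroup E] [NormedSpace ℝ E]
  [NormedAddCommGroup F] [InnerProductSpace ℝ F] [NormedAddCommGroup G] [InnerProductSpace ℝ G]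

theorem QuadraticMap.continuous_of_finiteDimensional [FiniteDimensional ℝ E]
    (Q : QuadraticForm ℝ E) : Continuous Q :=
  ((QuadraticMap.associated (R := ℝ) Q).toContinuousBilinearMap.continuous.clm_apply
    continuous_id).congr (QuadraticMap.associated_eq_self_apply ℝ Q)

noncomputable def normSqComp (T : E →ₗ[ℝ] G) : QuadraticForm ℝ E :=
  (LinearMap.BilinMap.toQuadraticMap (innerₗ G)).comp T

@[simp]
theorem normSqComp_apply (T : E →ₗ[ℝ] G) (x : E) : normSqComp T x = ‖T x‖ ^ 2 := by
  simp [normSqComp]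

theorem exists_quadraticForm_neg_on_ker_of_norm_le_mul_norm (T : E →L[ℝ] F)
    (hT : Function.Injective T) (L : E →ₗ[ℝ] G) (C : ℝ) :
    ∃ Q : QuadraticForm ℝ E, (∀ x, L x = 0 → x ≠ 0 → Q x < 0) ∧
      ∀ x, ‖x‖ ≤ C * ‖L x‖ → 0 ≤ Q x := by
  refine ⟨(‖T‖ * C) ^ 2 • normSqComp L - normSqComp (T : E →ₗ[ℝ] F), fun x hLx hx => ?_,
    fun x hx => ?_⟩
  · have hTx : 0 < ‖T x‖ := norm_pos_iff.2 fun h => hx (hT (h.trans (map_zero T).symm))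
    simp [hLx, hTx]
  · have hTx : ‖T x‖ ≤ ‖T‖ * C * ‖L x‖ := calc
      ‖T x‖ ≤ ‖T‖ * ‖x‖ := T.le_opNorm x
      _ ≤ ‖T‖ * (C * ‖L x‖) := mul_le_mul_of_nonneg_left hx (norm_nonneg T)
      _ = ‖T‖ * C * ‖L x‖ := (mul_assoc _ _ _).symm
    have := pow_le_pow_left₀ (norm_nonneg _) hTx 2
    simp only [sub_apply, smul_apply, normSqComp_apply, smul_eq_mul,
      ContinuousLinearMap.coe_coe]
    linarith [mul_pow (‖T‖ * C) ‖L x‖ 2]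

theorem QuadraticMap.exists_norm_le_mul_norm_of_neg_on_ker [FiniteDimensional ℝ E]
    (Q : QuadraticForm ℝ E) (L : E →ₗ[ℝ] G) (hQ : ∀ x, L x = 0 → x ≠ 0 → Q x < 0) :
    ∃ C > 0, ∀ x, 0 ≤ Q x → ‖x‖ ≤ C * ‖L x‖ := by
  set K := sphere (0 : E) 1 ∩ {x | 0 ≤ Q x}
  have hK : IsCompact K := (isCompact_sphere 0 1).inter_right
    (isClosed_le continuous_const Q.continuous_of_finiteDimensional)
  have hLK : ∀ u ∈ K, 0 < ‖L u‖ := by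
    rintro u ⟨hu, hQu⟩
    refine norm_pos_iff.2 fun hLu => (hQ u hLu ?_).not_ge hQu
    exact ne_zero_of_mem_sphere one_ne_zero ⟨u, hu⟩
  obtain ⟨m, hm, hmK⟩ := hK.exists_forall_le'
    (continuous_norm.comp L.continuous_of_finiteDimensional).continuousOn hLK
  refine ⟨m⁻¹, inv_pos.2 hm, fun x hQx => ?_⟩
  rcases eq_or_ne x 0 with rfl | hx
  · simp
  have hxK : ‖x‖⁻¹ • x ∈ K := by
    refine ⟨by simp [norm_smul, hx], ?_⟩
    simp only [Set.mem_ofPred_eq, QuadraticMap.map_smul, smul_eq_mul]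
    positivity
  have hmx := hmK _ hxK
  simp only [Function.comp_apply, map_smul, norm_smul, norm_inv, norm_norm] at hmx
  rw [le_inv_mul_iff₀ (norm_pos_iff.2 hx)] at hmx
  rw [le_inv_mul_iff₀ hm]
  linarith

/-- equivalence of the two formulations of the Support Property.  Let
`E = Γ ⊗ ℝ` be a finite-dimensional real normed space (`Γ ⊂ E` the lattice), let
`L : E → ℂ` be the (real-linear extension of the) central charge, and let
`a : Γ \ {0} → M` have support `Supp(a) = {γ ∈ Γ, γ ≠ 0, a(γ) ≠ 0}`.  Then the
following are equivalent:
(1) there is `C > 0` with `‖γ‖ ≤ C·|Z(γ)|` for all `γ ∈ Supp(a)`;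
(2) there is a quadratic form `Q` on `Γ ⊗ ℝ` which is negative on `ker(Z ⊗ ℝ) \ {0}`
and nonnegative on `Supp(a)`. -/
theorem stmt7 (E : Type) [NormedAddCommGroup E] [NormedSpace ℝ E]
    [FiniteDimensional ℝ E]
    (Γ : AddSubgroup E) (L : E →ₗ[ℝ] ℂ)
    (M : Type) (z : M) (a : E → M) :
    (∃ C : ℝ, 0 < C ∧ ∀ γ : E, γ ∈ Γ → γ ≠ 0 → a γ ≠ z →
        ‖γ‖ ≤ C * ‖L γ‖) ↔
    (∃ Q : QuadraticForm ℝ E,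
        (∀ x : E, L x = 0 → x ≠ 0 → Q x < 0) ∧
        (∀ γ : E, γ ∈ Γ → γ ≠ 0 → a γ ≠ z → 0 ≤ Q γ)) := by
  constructor
  · rintro ⟨C, -, hC⟩
    obtain ⟨Q, hker, hQ⟩ := exists_quadraticForm_neg_on_ker_of_norm_le_mul_norm
      (toEuclidean : E ≃L[ℝ] _).toContinuousLinearMap toEuclidean.injective L C
    exact ⟨Q, hker, fun γ hγ h0 ha => hQ γ (hC γ hγ h0 ha)⟩
  · rintro ⟨Q, hker, hQ⟩
    obtain ⟨C, hC0, hC⟩ := Q.exists_norm_le_mul_norm_of_neg_on_ker L hker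
    exact ⟨C, hC0, fun γ hγ h0 ha => hC γ (hQ γ hγ h0 ha)⟩
end
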